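/- With X = μ + Σ^{1/2} W U and Σ* = (J_{d+1}/J_{d-1}) Σ, define X* = X − (X − μ) / √((X−μ)ᵀ (Σ*)⁻¹ (X−μ)). Then E[X*] = μ and Var(X*) = E[(W − √(E[W²]))²] · Σ / d. -/

import Mathlib

open MeasureTheory Real Matrix ProbabilityTheory

/-- `J q α = ∫₀^∞ t^q exp(-(t-1)²/(2α²)) dt`. -/
noncomputable def J (q : ℕ) (α : ℝ) : ℝ :=
  ∫ t in Set.Ioi (0 : ℝ), t ^ q * Real.exp (-(t - 1) ^ 2 / (2 * α ^ 2))

/-- The radial density `φ(t) = t^{d-1} exp(-(t-1)²/(2σ²)) / J_{d-1}(σ)` on `[0, ∞)`. -/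
noncomputable def radialDensity (d : ℕ) (σ : ℝ) (t : ℝ) : ℝ :=
  Set.indicator (Set.Ici (0 : ℝ))
    (fun s => s ^ (d - 1) * Real.exp (-(s - 1) ^ 2 / (2 * σ ^ 2)) / J (d - 1) σ) t

lemma aux_int_pow_gauss (k : ℕ) {b : ℝ} (hb : 0 < b) :
    Integrable (fun x : ℝ => x ^ k * Real.exp (-b * x ^ 2)) := by
  have hb2 : 0 < b / 2 := by linarith
  set C : ℝ := (k.factorial : ℝ) * (2 / b) ^ k + 1 with hC
  refine Integrable.mono' ((integrable_exp_neg_mul_sq hb2).const_mul C)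
    (Measurable.aestronglyMeasurable (by measurability)) ?_
  refine Filter.Eventually.of_forall fun x => ?_
  have hx2k : (0:ℝ) ≤ x ^ (2 * k) := by rw [pow_mul]; positivity
  have h1 : |x| ^ k ≤ x ^ (2 * k) + 1 := by
    rcases le_total (|x|) 1 with h | h
    · have : |x| ^ k ≤ 1 := pow_le_one₀ (abs_nonneg x) h
      linarith
    · calc |x| ^ k ≤ |x| ^ (2 * k) := pow_le_pow_right₀ h (by omega)
        _ = x ^ (2 * k) := by rw [← abs_pow, abs_of_nonneg hx2k]
        _ ≤ x ^ (2 * k) + 1 := by linarith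
  have h2 : x ^ (2 * k) ≤ (k.factorial : ℝ) * (2 / b) ^ k * Real.exp (b / 2 * x ^ 2) := by
    have hkey := Real.pow_div_factorial_le_exp (x := b / 2 * x ^ 2) (by positivity) k
    rw [div_le_iff₀ (by positivity)] at hkey
    have hx : (b / 2 * x ^ 2) ^ k = (b / 2) ^ k * x ^ (2 * k) := by
      rw [mul_pow, pow_mul]
    rw [hx] at hkey
    have hA : (0:ℝ) < (b / 2) ^ k := by positivity
    have h2b : (2 / b) ^ k = ((b / 2) ^ k)⁻¹ := by
      rw [← inv_pow]; congr 1; rw [inv_div]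
    rw [h2b, ← mul_le_mul_iff_right₀ hA]
    calc (b / 2) ^ k * x ^ (2 * k) ≤ Real.exp (b / 2 * x ^ 2) * k.factorial := hkey
      _ = (b / 2) ^ k * ((k.factorial : ℝ) * ((b / 2) ^ k)⁻¹ * Real.exp (b / 2 * x ^ 2)) := by
          field_simp
  have hexp : Real.exp (b / 2 * x ^ 2) * Real.exp (-b * x ^ 2) = Real.exp (-(b / 2) * x ^ 2) := by
    rw [← Real.exp_add]; ring_nf
  have hexp2 : Real.exp (-b * x ^ 2) ≤ Real.exp (-(b / 2) * x ^ 2) := by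
    apply Real.exp_le_exp.mpr; nlinarith [sq_nonneg x]
  have hen : (0:ℝ) < Real.exp (-b * x ^ 2) := Real.exp_pos _
  calc ‖x ^ k * Real.exp (-b * x ^ 2)‖ = |x| ^ k * Real.exp (-b * x ^ 2) := by
        rw [norm_mul, norm_pow, Real.norm_eq_abs, Real.norm_eq_abs, Real.abs_exp]
    _ ≤ (x ^ (2 * k) + 1) * Real.exp (-b * x ^ 2) := mul_le_mul_of_nonneg_right h1 hen.le
    _ ≤ ((k.factorial : ℝ) * (2 / b) ^ k * Real.exp (b / 2 * x ^ 2) + 1) * Real.exp (-b * x ^ 2) :=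
        mul_le_mul_of_nonneg_right (by linarith) hen.le
    _ = (k.factorial : ℝ) * (2 / b) ^ k * (Real.exp (b / 2 * x ^ 2) * Real.exp (-b * x ^ 2))
          + Real.exp (-b * x ^ 2) := by ring
    _ ≤ (k.factorial : ℝ) * (2 / b) ^ k * Real.exp (-(b / 2) * x ^ 2)
          + Real.exp (-(b / 2) * x ^ 2) := by
        rw [hexp]
        have h3 : (0:ℝ) ≤ (k.factorial : ℝ) * (2 / b) ^ k := by positivity
        nlinarith
    _ = C * Real.exp (-(b / 2) * x ^ 2) := by rw [hC]; ring

lemma aux_int_shift (k : ℕ) {b : ℝ} (hb : 0 < b) :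
    Integrable (fun t : ℝ => t ^ k * Real.exp (-(t - 1) ^ 2 / b)) := by
  have hb' : (0:ℝ) < 1 / b := by positivity
  have h1 : Integrable (fun x : ℝ => (x + 1) ^ k * Real.exp (-(1 / b) * x ^ 2)) := by
    have heq : (fun x : ℝ => (x + 1) ^ k * Real.exp (-(1 / b) * x ^ 2))
        = fun x => ∑ m ∈ Finset.range (k + 1),
            (k.choose m : ℝ) * (x ^ m * Real.exp (-(1 / b) * x ^ 2)) := by
      funext x
      rw [add_pow, Finset.sum_mul]
      exact Finset.sum_congr rfl fun m _ => by ring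
    rw [heq]
    exact integrable_finset_sum _ fun m _ => (aux_int_pow_gauss m hb').const_mul _
  have h2 := h1.comp_sub_right 1
  refine h2.congr (Filter.Eventually.of_forall fun t => ?_)
  simp only []
  rw [sub_add_cancel]
  congr 2
  ring

lemma J_pos (q : ℕ) {σ : ℝ} (hσ : 0 < σ) : 0 < _root_.J q σ := by
  have hb : (0:ℝ) < 2 * σ ^ 2 := by positivity
  have hint : IntegrableOn (fun t : ℝ => t ^ q * Real.exp (-(t - 1) ^ 2 / (2 * σ ^ 2)))
      (Set.Ioi 0) := (aux_int_shift q hb).integrableOn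
  have h0 : 0 ≤ᵐ[volume.restrict (Set.Ioi (0:ℝ))]
      fun t => t ^ q * Real.exp (-(t - 1) ^ 2 / (2 * σ ^ 2)) := by
    filter_upwards [ae_restrict_mem measurableSet_Ioi] with t ht
    have ht' : (0:ℝ) < t := ht
    positivity
  have hsupp : 0 < volume ((Function.support fun t : ℝ =>
      t ^ q * Real.exp (-(t - 1) ^ 2 / (2 * σ ^ 2))) ∩ Set.Ioi 0) := by
    have hss : Set.Ioi (0:ℝ) ⊆ (Function.support fun t : ℝ =>
        t ^ q * Real.exp (-(t - 1) ^ 2 / (2 * σ ^ 2))) ∩ Set.Ioi 0 := by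
      intro t ht
      exact ⟨mul_ne_zero (pow_ne_zero _ (ne_of_gt ht)) (Real.exp_ne_zero _), ht⟩
    refine lt_of_lt_of_le ?_ (measure_mono hss)
    simp [Real.volume_Ioi]
  have := (setIntegral_pos_iff_support_of_nonneg_ae h0 hint).mpr hsupp
  rw [_root_.J]
  exact this

set_option maxHeartbeats 1000000 in
theorem ellipsoidal_Xstar_mean_and_variance {Ω : Type*} [MeasureSpace Ω]
    [IsProbabilityMeasure (volume : Measure Ω)]
    (d : ℕ) (hd : 2 ≤ d) (σ : ℝ) (hσ : 0 < σ)
    (μ : Fin d → ℝ) (Sig R : Matrix (Fin d) (Fin d) ℝ)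
    (hSig : Sig.PosDef) (hR : R.PosDef) (hRR : R * R = Sig)
    (W : Ω → ℝ) (hWmeas : Measurable W)
    (hW : Measure.map W (volume : Measure Ω) =
      volume.withDensity (fun t => ENNReal.ofReal (radialDensity d σ t)))
    (U : Ω → (Fin d → ℝ)) (hUmeas : Measurable U)
    (hUsphere : ∀ᵐ ω : Ω, U ω ⬝ᵥ U ω = 1)
    (hUmean : (∫ ω : Ω, U ω) = 0)
    (hUvar : ∀ i j, (∫ ω : Ω, U ω i * U ω j) = if i = j then (d : ℝ)⁻¹ else 0)
    (hIndep : IndepFun W U (volume : Measure Ω))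
    (X : Ω → (Fin d → ℝ)) (hX : ∀ ω, X ω = μ + R *ᵥ (W ω • U ω))
    (SigStar : Matrix (Fin d) (Fin d) ℝ)
    (hSigStar : SigStar = (J (d + 1) σ / J (d - 1) σ) • Sig)
    (Xstar : Ω → (Fin d → ℝ))
    (hXstar : ∀ ω, Xstar ω =
      X ω - (Real.sqrt ((X ω - μ) ⬝ᵥ (SigStar⁻¹ *ᵥ (X ω - μ))))⁻¹ • (X ω - μ)) :
    (∫ ω : Ω, Xstar ω) = μ ∧
      (Matrix.of fun i j => ∫ ω : Ω, (Xstar ω i - μ i) * (Xstar ω j - μ j)) =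
        ((∫ ω : Ω, (W ω - Real.sqrt (∫ ω' : Ω, (W ω') ^ 2)) ^ 2) / d) • Sig := by
  have hc1 : 0 < _root_.J (d - 1) σ := J_pos _ hσ
  have hc2 : 0 < _root_.J (d + 1) σ := J_pos _ hσ
  set c : ℝ := _root_.J (d + 1) σ / _root_.J (d - 1) σ with hcdef
  have hc : 0 < c := div_pos hc2 hc1
  have hb : (0:ℝ) < 2 * σ ^ 2 := by positivity
  -- density facts
  have hφnn : ∀ t, 0 ≤ radialDensity d σ t := by
    intro t
    unfold radialDensity
    apply Set.indicator_nonneg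
    intro s hs
    have hs' : (0:ℝ) ≤ s := hs
    positivity
  have hφmeas : Measurable (radialDensity d σ) := by
    unfold radialDensity
    exact Measurable.indicator (by measurability) measurableSet_Ici
  have hW' : Measure.map W (volume : Measure Ω) =
      volume.withDensity (fun t => ((radialDensity d σ t).toNNReal : ENNReal)) := hW
  -- Step B : second moment
  have hEW2 : (∫ ω : Ω, (W ω) ^ 2) = c := by
    have h1 : (∫ ω : Ω, (W ω) ^ 2) = ∫ t : ℝ, t ^ 2 ∂(Measure.map W volume) :=
      (integral_map hWmeas.aemeasurable
        ((measurable_id.pow_const 2).aestronglyMeasurable)).symm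
    rw [h1, hW', integral_withDensity_eq_integral_smul hφmeas.real_toNNReal]
    have h2 : ∀ t : ℝ, ((radialDensity d σ t).toNNReal) • t ^ 2
        = Set.indicator (Set.Ici (0:ℝ))
            (fun s => s ^ (d + 1) * Real.exp (-(s - 1) ^ 2 / (2 * σ ^ 2)) / _root_.J (d - 1) σ)
            t := by
      intro t
      rw [NNReal.smul_def, Real.coe_toNNReal _ (hφnn t), smul_eq_mul]
      unfold radialDensity
      by_cases ht : t ∈ Set.Ici (0:ℝ)
      · rw [Set.indicator_of_mem ht, Set.indicator_of_mem ht]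
        have hpow : t ^ (d - 1) * t ^ 2 = t ^ (d + 1) := by
          rw [← pow_add]; congr 1; omega
        calc t ^ (d - 1) * Real.exp (-(t - 1) ^ 2 / (2 * σ ^ 2)) / _root_.J (d - 1) σ * t ^ 2
            = (t ^ (d - 1) * t ^ 2) * Real.exp (-(t - 1) ^ 2 / (2 * σ ^ 2))
                / _root_.J (d - 1) σ := by ring
          _ = t ^ (d + 1) * Real.exp (-(t - 1) ^ 2 / (2 * σ ^ 2)) / _root_.J (d - 1) σ := by
              rw [hpow]
      · rw [Set.indicator_of_notMem ht, Set.indicator_of_notMem ht, zero_mul]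
    simp_rw [h2]
    rw [integral_indicator measurableSet_Ici, integral_Ici_eq_integral_Ioi, integral_div]
    rw [hcdef]
    rfl
  -- Step C : W > 0 a.s.
  have hWpos : ∀ᵐ ω : Ω, 0 < W ω := by
    rw [ae_iff]
    have hset : {ω : Ω | ¬ 0 < W ω} = W ⁻¹' (Set.Iic 0) := by
      ext ω; simp [not_lt]
    rw [hset, ← Measure.map_apply hWmeas measurableSet_Iic, hW,
      withDensity_apply _ measurableSet_Iic]
    have hz : ∀ t ∈ Set.Iic (0:ℝ), ENNReal.ofReal (radialDensity d σ t) = 0 := by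
      intro t ht
      unfold radialDensity
      by_cases h : t ∈ Set.Ici (0:ℝ)
      · have ht0 : t = 0 := le_antisymm ht h
        rw [Set.indicator_of_mem h, ht0]
        rw [zero_pow (by omega : d - 1 ≠ 0), zero_mul, zero_div]
        simp
      · rw [Set.indicator_of_notMem h]; simp
    calc (∫⁻ t in Set.Iic (0:ℝ), ENNReal.ofReal (radialDensity d σ t))
        = ∫⁻ _t in Set.Iic (0:ℝ), 0 := setLIntegral_congr_fun measurableSet_Iic
            hz
      _ = 0 := by simp
  -- matrix facts
  have hRdet : IsUnit R.det := isUnit_iff_ne_zero.mpr (ne_of_gt hR.det_pos)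
  have hSdet : IsUnit Sig.det := isUnit_iff_ne_zero.mpr (ne_of_gt hSig.det_pos)
  have hRT : R.transpose = R := by
    rw [← Matrix.conjTranspose_eq_transpose_of_trivial]
    exact hR.isHermitian
  have hRsym : ∀ a b, R a b = R b a := by
    intro a b
    conv_lhs => rw [← hRT]
    exact Matrix.transpose_apply R a b
  have hSinv : Sig⁻¹ = R⁻¹ * R⁻¹ := by rw [← hRR, Matrix.mul_inv_rev]
  have hStarInv : SigStar⁻¹ = c⁻¹ • Sig⁻¹ := by
    apply Matrix.inv_eq_right_inv
    rw [hSigStar, Matrix.smul_mul, Matrix.mul_smul, Matrix.mul_nonsing_inv _ hSdet,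
      smul_smul, mul_inv_cancel₀ (ne_of_gt hc), one_smul]
  -- Step D : key a.e. identity
  have hkey : ∀ᵐ ω : Ω, Xstar ω = μ + (W ω - Real.sqrt c) • (R *ᵥ U ω) := by
    filter_upwards [hUsphere, hWpos] with ω hU1 hWp
    have hXsub : X ω - μ = W ω • (R *ᵥ U ω) := by
      rw [hX ω, add_sub_cancel_left, Matrix.mulVec_smul]
    have hru : (R *ᵥ U ω) ⬝ᵥ (Sig⁻¹ *ᵥ (R *ᵥ U ω)) = 1 := by
      rw [hSinv, Matrix.mulVec_mulVec]
      have h3 : R⁻¹ * R⁻¹ * R = R⁻¹ := by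
        rw [Matrix.mul_assoc, Matrix.nonsing_inv_mul _ hRdet, Matrix.mul_one]
      rw [h3, Matrix.dotProduct_mulVec]
      have h4 : (R *ᵥ U ω) ᵥ* R⁻¹ = U ω := by
        have h5 : (R⁻¹)ᵀ = R⁻¹ := by rw [Matrix.transpose_nonsing_inv, hRT]
        rw [← h5, Matrix.vecMul_transpose, Matrix.mulVec_mulVec,
          Matrix.nonsing_inv_mul _ hRdet, Matrix.one_mulVec]
      rw [h4, hU1]
    have hQ : (X ω - μ) ⬝ᵥ (SigStar⁻¹ *ᵥ (X ω - μ)) = W ω ^ 2 * c⁻¹ := by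
      rw [hXsub, hStarInv, Matrix.mulVec_smul, Matrix.smul_mulVec,
        smul_dotProduct, dotProduct_smul, dotProduct_smul, hru]
      simp only [smul_eq_mul]
      ring
    rw [hXstar ω, hQ, hXsub]
    have hsqrt : Real.sqrt (W ω ^ 2 * c⁻¹) = W ω * (Real.sqrt c)⁻¹ := by
      rw [Real.sqrt_mul (sq_nonneg _), Real.sqrt_sq hWp.le, Real.sqrt_inv]
    rw [hsqrt, mul_inv, inv_inv, smul_smul]
    have h6 : (W ω)⁻¹ * Real.sqrt c * W ω = Real.sqrt c := by
      field_simp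
    rw [h6, hX ω, Matrix.mulVec_smul, sub_smul]
    abel
  -- boundedness of U
  have hUbdd : ∀ᵐ ω : Ω, ∀ k, |U ω k| ≤ 1 := by
    filter_upwards [hUsphere] with ω h1
    intro k
    have h1' : (∑ l, U ω l * U ω l) = 1 := h1
    have hsq : U ω k * U ω k ≤ 1 := by
      rw [← h1']
      exact Finset.single_le_sum (f := fun l => U ω l * U ω l)
        (fun l _ => mul_self_nonneg _) (Finset.mem_univ k)
    exact abs_le_one_iff_mul_self_le_one.mpr hsq
  have hUkmeas : ∀ k, Measurable (fun ω => U ω k) := fun k =>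
    (measurable_pi_apply k).comp hUmeas
  have hUkint : ∀ k, Integrable (fun ω => U ω k) := by
    intro k
    refine Integrable.mono' (integrable_const (1:ℝ)) (hUkmeas k).aestronglyMeasurable ?_
    filter_upwards [hUbdd] with ω h
    simpa using h k
  have hUklint : ∀ k l, Integrable (fun ω => U ω k * U ω l) := by
    intro k l
    refine Integrable.mono' (integrable_const (1:ℝ))
      ((hUkmeas k).mul (hUkmeas l)).aestronglyMeasurable ?_
    filter_upwards [hUbdd] with ω h
    have := mul_le_one₀ (h k) (abs_nonneg _) (h l)
    simpa [abs_mul] using this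
  have hUint : Integrable U := by
    refine Integrable.mono' (integrable_const (1:ℝ)) hUmeas.aestronglyMeasurable ?_
    filter_upwards [hUbdd] with ω h
    refine (pi_norm_le_iff_of_nonneg (x := U ω) zero_le_one).mpr fun k => ?_
    simpa using h k
  -- integrability of W
  have hWint : Integrable W := by
    have hg : Integrable (fun t : ℝ => t ^ d * Real.exp (-(t - 1) ^ 2 / (2 * σ ^ 2))
        / _root_.J (d - 1) σ) := (aux_int_shift d hb).div_const _
    have h1 : Integrable (fun t : ℝ => t) (Measure.map W volume) := by
      rw [hW, integrable_withDensity_iff hφmeas.ennreal_ofReal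
        (Filter.Eventually.of_forall fun t => ENNReal.ofReal_lt_top)]
      have heq : (fun t : ℝ => t * (ENNReal.ofReal (radialDensity d σ t)).toReal)
          = fun t => t * radialDensity d σ t :=
        funext fun t => by rw [ENNReal.toReal_ofReal (hφnn t)]
      rw [heq]
      refine Integrable.mono' hg.norm
        (measurable_id.mul hφmeas).aestronglyMeasurable
        (Filter.Eventually.of_forall fun t => ?_)
      by_cases ht : t ∈ Set.Ici (0:ℝ)
      · have ht' : (0:ℝ) ≤ t := ht
        unfold radialDensity
        rw [Set.indicator_of_mem ht]
        have hpow : t * t ^ (d - 1) = t ^ d := by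
          rw [← pow_succ']; congr 1; omega
        have : t * (t ^ (d - 1) * Real.exp (-(t - 1) ^ 2 / (2 * σ ^ 2)) / _root_.J (d - 1) σ)
            = t ^ d * Real.exp (-(t - 1) ^ 2 / (2 * σ ^ 2)) / _root_.J (d - 1) σ := by
          rw [← hpow]; ring
        rw [this]
      · unfold radialDensity
        rw [Set.indicator_of_notMem ht, mul_zero, norm_zero]
        exact norm_nonneg _
    exact (integrable_map_measure aestronglyMeasurable_id hWmeas.aemeasurable).mp h1
  have hWsubint : Integrable (fun ω => W ω - Real.sqrt c) :=
    hWint.sub (integrable_const _)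
  -- mulVec measurability and integrability
  have hrukmeas : ∀ i, Measurable (fun ω => (R *ᵥ U ω) i) := by
    intro i
    have : (fun ω => (R *ᵥ U ω) i) = fun ω => ∑ k, R i k * U ω k := by
      funext ω; rfl
    rw [this]
    exact Finset.measurable_sum _ fun k _ => (hUkmeas k).const_mul _
  have hrumeas : Measurable (fun ω => R *ᵥ U ω) :=
    measurable_pi_lambda _ fun i => hrukmeas i
  set M : ℝ := ∑ i, ∑ k, |R i k| with hM
  have hMnn : 0 ≤ M := Finset.sum_nonneg fun i _ =>
    Finset.sum_nonneg fun k _ => abs_nonneg _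
  have hrub : ∀ᵐ ω : Ω, ∀ i, |(R *ᵥ U ω) i| ≤ M := by
    filter_upwards [hUbdd] with ω h
    intro i
    have h1 : |(R *ᵥ U ω) i| ≤ ∑ k, |R i k| := by
      have : (R *ᵥ U ω) i = ∑ k, R i k * U ω k := rfl
      rw [this]
      refine (Finset.abs_sum_le_sum_abs _ _).trans ?_
      refine Finset.sum_le_sum fun k _ => ?_
      rw [abs_mul]
      calc |R i k| * |U ω k| ≤ |R i k| * 1 :=
            mul_le_mul_of_nonneg_left (h k) (abs_nonneg _)
        _ = |R i k| := mul_one _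
    refine h1.trans ?_
    exact Finset.single_le_sum (f := fun i => ∑ k, |R i k|)
      (fun i _ => Finset.sum_nonneg fun k _ => abs_nonneg _) (Finset.mem_univ i)
  have hgint : Integrable (fun ω => (W ω - Real.sqrt c) • (R *ᵥ U ω)) := by
    refine Integrable.mono' (hWsubint.norm.mul_const M)
      ((hWmeas.sub measurable_const).smul hrumeas).aestronglyMeasurable ?_
    filter_upwards [hrub] with ω h
    rw [norm_smul]
    refine mul_le_mul_of_nonneg_left ?_ (norm_nonneg _)
    refine (pi_norm_le_iff_of_nonneg (x := R *ᵥ U ω) hMnn).mpr fun i => ?_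
    simpa using h i
  have hproj : ∀ (f : Ω → Fin d → ℝ), Integrable f → ∀ i : Fin d,
      (∫ ω, f ω) i = ∫ ω, f ω i := by
    intro f hf i
    exact ((ContinuousLinearMap.proj i : (Fin d → ℝ) →L[ℝ] ℝ).integral_comp_comm hf).symm
  have hU0 : ∀ k, (∫ ω, U ω k) = 0 := by
    intro k
    have := hproj U hUint k
    rw [hUmean] at this
    simpa using this.symm
  have hru0 : ∀ i, (∫ ω, (R *ᵥ U ω) i) = 0 := by
    intro i
    have he : (fun ω => (R *ᵥ U ω) i) = fun ω => ∑ k, R i k * U ω k := by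
      funext ω; rfl
    rw [he, integral_finset_sum _ fun k _ => (hUkint k).const_mul _]
    refine Finset.sum_eq_zero fun k _ => ?_
    rw [integral_const_mul, hU0 k, mul_zero]
  -- mean
  have hmean : (∫ ω, Xstar ω) = μ := by
    rw [integral_congr_ae hkey, integral_add (integrable_const μ) hgint,
      integral_const, probReal_univ, one_smul]
    have hzero : (∫ ω, (W ω - Real.sqrt c) • (R *ᵥ U ω)) = 0 := by
      refine funext fun i => ?_
      rw [hproj _ hgint i]
      have he : (fun ω => ((W ω - Real.sqrt c) • (R *ᵥ U ω)) i)
          = fun ω => (W ω - Real.sqrt c) * (R *ᵥ U ω) i := rfl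
      rw [he]
      have hindep2 : IndepFun (fun ω => W ω - Real.sqrt c) (fun ω => (R *ᵥ U ω) i)
          (volume : Measure Ω) := by
        have hf : Measurable (fun w : ℝ => w - Real.sqrt c) :=
          measurable_id.sub_const _
        have hg2 : Measurable (fun u : Fin d → ℝ => (R *ᵥ u) i) := by
          have : (fun u : Fin d → ℝ => (R *ᵥ u) i) = fun u => ∑ k, R i k * u k := by
            funext u; rfl
          rw [this]
          exact Finset.measurable_sum _ fun k _ => (measurable_pi_apply k).const_mul _
        exact hIndep.comp hf hg2
      have := hindep2.integral_mul_eq_mul_integral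
        ((hWmeas.sub_const _).aestronglyMeasurable)
        (hrukmeas i).aestronglyMeasurable
      rw [show (fun ω => (W ω - Real.sqrt c) * (R *ᵥ U ω) i)
        = (fun ω => W ω - Real.sqrt c) * (fun ω => (R *ᵥ U ω) i) from rfl]
      rw [this, hru0 i, mul_zero]
      rfl
    rw [hzero, add_zero]
  -- variance
  have hvar : ∀ i j, (∫ ω, (Xstar ω i - μ i) * (Xstar ω j - μ j))
      = (∫ ω, (W ω - Real.sqrt c) ^ 2) * ((d : ℝ)⁻¹ * Sig i j) := by
    intro i j
    have hcongr : (fun ω => (Xstar ω i - μ i) * (Xstar ω j - μ j)) =ᵐ[volume]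
        fun ω => (W ω - Real.sqrt c) ^ 2 * ((R *ᵥ U ω) i * (R *ᵥ U ω) j) := by
      filter_upwards [hkey] with ω h
      rw [h]
      simp only [Pi.add_apply, Pi.smul_apply, smul_eq_mul]
      ring
    rw [integral_congr_ae hcongr]
    have hindep2 : IndepFun (fun ω => (W ω - Real.sqrt c) ^ 2)
        (fun ω => (R *ᵥ U ω) i * (R *ᵥ U ω) j) (volume : Measure Ω) := by
      have hf : Measurable (fun w : ℝ => (w - Real.sqrt c) ^ 2) :=
        (measurable_id.sub_const _).pow_const 2
      have hg2 : Measurable (fun u : Fin d → ℝ => (R *ᵥ u) i * (R *ᵥ u) j) := by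
        have e1 : (fun u : Fin d → ℝ => (R *ᵥ u) i * (R *ᵥ u) j)
            = fun u => (∑ k, R i k * u k) * (∑ k, R j k * u k) := by
          funext u; rfl
        rw [e1]
        exact (Finset.measurable_sum _ fun k _ => (measurable_pi_apply k).const_mul _).mul
          (Finset.measurable_sum _ fun k _ => (measurable_pi_apply k).const_mul _)
      exact hIndep.comp hf hg2
    have hmul := hindep2.integral_mul_eq_mul_integral
      (((hWmeas.sub_const _).pow_const 2).aestronglyMeasurable)
      ((hrukmeas i).mul (hrukmeas j)).aestronglyMeasurable
    rw [show (fun ω => (W ω - Real.sqrt c) ^ 2 * ((R *ᵥ U ω) i * (R *ᵥ U ω) j))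
      = (fun ω => (W ω - Real.sqrt c) ^ 2) * (fun ω => (R *ᵥ U ω) i * (R *ᵥ U ω) j)
      from rfl, hmul]
    congr 1
    have hexp : (fun ω => (R *ᵥ U ω) i * (R *ᵥ U ω) j)
        = fun ω => ∑ k, ∑ l, R i k * R j l * (U ω k * U ω l) := by
      funext ω
      show (∑ k, R i k * U ω k) * (∑ l, R j l * U ω l) = _
      rw [Finset.sum_mul_sum]
      exact Finset.sum_congr rfl fun k _ => Finset.sum_congr rfl fun l _ => by ring
    show (∫ ω, ((fun ω => (R *ᵥ U ω) i * (R *ᵥ U ω) j) ω)) = (d : ℝ)⁻¹ * Sig i j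
    rw [hexp, integral_finset_sum _ fun k _ =>
      integrable_finset_sum _ fun l _ => (hUklint k l).const_mul _]
    have hinner : ∀ k, (∫ ω, ∑ l, R i k * R j l * (U ω k * U ω l))
        = R i k * R j k * (d : ℝ)⁻¹ := by
      intro k
      rw [integral_finset_sum _ fun l _ => (hUklint k l).const_mul _]
      have he2 : ∀ l, (∫ ω, R i k * R j l * (U ω k * U ω l))
          = R i k * R j l * (if k = l then (d : ℝ)⁻¹ else 0) := by
        intro l
        rw [integral_const_mul, hUvar k l]
      simp_rw [he2]
      rw [Finset.sum_congr rfl (fun l _ => mul_ite (k = l) (R i k * R j l) ((d:ℝ)⁻¹) 0)]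
      simp [Finset.sum_ite_eq]
    simp_rw [hinner]
    rw [← Finset.sum_mul]
    have hsum : (∑ k, R i k * R j k) = Sig i j := by
      rw [← hRR, Matrix.mul_apply]
      exact Finset.sum_congr rfl fun k _ => by rw [hRsym j k]
    rw [hsum]
    ring
  refine ⟨hmean, ?_⟩
  rw [hEW2]
  ext i j
  rw [Matrix.of_apply, hvar i j, Matrix.smul_apply, smul_eq_mul]
  ring
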